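/- (FloodSet validity.) For any delivery pattern and every process p, the decision of p is some process's initial proposal: there exists a process q such that the minimum of W r p equals init q. -/

import Mathlib

open scoped Classical

/-- The FloodSet execution: `W 0 p = {init p}` and, for `t < r`,
`W (t+1) p = W t p ∪ ⋃ q, (if delivered t q p then W t q else ∅)`
(beyond round `r` the set is just carried along). -/
noncomputable def floodW {n r : ℕ} {V : Type} (init : Fin n → V)
    (delivered : Fin r → Fin n → Fin n → Prop) : ℕ → Fin n → Finset V
  | 0, p => {init p}
  | t + 1, p =>
      if h : t < r then
        floodW init delivered t p ∪
          Finset.univ.biUnion fun q =>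
            if delivered ⟨t, h⟩ q p then floodW init delivered t q else ∅
      else floodW init delivered t p

/-- Process `p` is alive at the end of round `t`. -/
def aliveAtEnd {n r : ℕ} (crash : Fin n → Option (Fin r)) (t : ℕ) (p : Fin n) : Prop :=
  crash p = none ∨ ∃ s : Fin r, crash p = some s ∧ t < s.val

/-- The delivery pattern is consistent with the crash pattern. -/
def consistentDel {n r : ℕ} (crash : Fin n → Option (Fin r))
    (delivered : Fin r → Fin n → Fin n → Prop) : Prop :=
  (∀ (t : Fin r) (q p : Fin n),
      (crash q = none ∨ ∃ s : Fin r, crash q = some s ∧ t.val < s.val) → delivered t q p) ∧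
  (∀ (t : Fin r) (q p : Fin n) (s : Fin r), crash q = some s → s.val < t.val →
      ¬ delivered t q p)

section

variable {n r : ℕ} {V : Type} (init : Fin n → V) (delivered : Fin r → Fin n → Fin n → Prop)

theorem floodW_subset_range (t : ℕ) (p : Fin n) :
    ↑(floodW init delivered t p) ⊆ Set.range init := by
  induction t generalizing p with
  | zero => simp [floodW]
  | succ t ih =>
    rw [floodW]
    split_ifs
    · intro x hx
      simp only [Finset.coe_union, Finset.coe_biUnion, Finset.coe_univ, Set.mem_univ,
        Set.iUnion_true, Set.mem_union, Set.mem_iUnion] at hx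
      rcases hx with hx | ⟨q, hx⟩
      · exact ih p hx
      · split_ifs at hx
        · exact ih q hx
        · simp at hx
    · exact ih p

theorem floodW_nonempty (t : ℕ) (p : Fin n) : (floodW init delivered t p).Nonempty := by
  induction t generalizing p with
  | zero => simp [floodW]
  | succ t ih =>
    rw [floodW]
    split_ifs
    · exact (ih p).mono Finset.subset_union_left
    · exact ih p

end

theorem stmt_10_general (n r : ℕ)
    (V : Type) [LinearOrder V]
    (init : Fin n → V) (delivered : Fin r → Fin n → Fin n → Prop) :
    ∀ p : Fin n, ∃ q : Fin n,
      (floodW init delivered r p).min = (init q : WithBot V) := by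
  intro p
  obtain ⟨a, hmin⟩ := Finset.min_of_nonempty (floodW_nonempty init delivered r p)
  obtain ⟨q, rfl⟩ := floodW_subset_range init delivered r p (Finset.mem_of_min hmin)
  exact ⟨q, hmin⟩

/-- FloodSet validity. -/
theorem stmt_10 (n r : ℕ) (hr : 1 ≤ r)
    (V : Type) [Fintype V] [Nonempty V] [LinearOrder V]
    (init : Fin n → V) (delivered : Fin r → Fin n → Fin n → Prop) :
    ∀ p : Fin n, ∃ q : Fin n,
      (floodW init delivered r p).min = (init q : WithBot V) :=
  stmt_10_general n r V init delivered
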